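/- Let J_1,…,J_M be n×n complex matrices each of which is nilpotent (equivalently, 0 is the only eigenvalue of each J_l), let λ_1,…,λ_M be positive reals, and let ψ ∈ ℂⁿ be a unit vector. Then L_D[ψψᴴ] = 0 if and only if Γ ψ = 0. -/
import Mathlib


open Matrix BigOperators

/-- The decoherence superoperator `L_D[ρ] = Σ_l λ_l (J_l ρ J_lᴴ − ½ J_lᴴ J_l ρ − ½ ρ J_lᴴ J_l)`. -/
noncomputable def LD {M n : ℕ} (J : Fin M → Matrix (Fin n) (Fin n) ℂ)
    (lam : Fin M → ℝ) (ρ : Matrix (Fin n) (Fin n) ℂ) : Matrix (Fin n) (Fin n) ℂ :=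
  ∑ l, (lam l : ℂ) • (J l * ρ * (J l)ᴴ
    - (1 / 2 : ℂ) • ((J l)ᴴ * J l * ρ) - (1 / 2 : ℂ) • (ρ * ((J l)ᴴ * J l)))

/-- The decoherence operator `Γ = Σ_l λ_l J_lᴴ J_l`. -/
noncomputable def Gam {M n : ℕ} (J : Fin M → Matrix (Fin n) (Fin n) ℂ)
    (lam : Fin M → ℝ) : Matrix (Fin n) (Fin n) ℂ :=
  ∑ l, (lam l : ℂ) • ((J l)ᴴ * J l)

section Helpers

variable {m n : ℕ}

private lemma sum_mulVec' {ι : Type*} (s : Finset ι) (A : ι → Matrix (Fin m) (Fin n) ℂ)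
    (v : Fin n → ℂ) : (∑ l ∈ s, A l) *ᵥ v = ∑ l ∈ s, A l *ᵥ v := by
  ext i
  simp only [mulVec, dotProduct, Matrix.sum_apply, Finset.sum_mul, Finset.sum_apply]
  rw [Finset.sum_comm]

private lemma dotProduct_sum' {ι : Type*} (s : Finset ι) (u : Fin n → ℂ)
    (f : ι → (Fin n → ℂ)) : u ⬝ᵥ (∑ l ∈ s, f l) = ∑ l ∈ s, u ⬝ᵥ f l := by
  simp only [dotProduct, Finset.sum_apply, Finset.mul_sum]
  rw [Finset.sum_comm]

private lemma vecMulVec_mulVec' (a b v : Fin n → ℂ) :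
    (vecMulVec a b).mulVec v = (b ⬝ᵥ v) • a := by
  ext i
  simp only [mulVec, vecMulVec_apply, dotProduct, Pi.smul_apply, smul_eq_mul, Finset.sum_mul]
  exact Finset.sum_congr rfl fun j _ => by ring

private lemma mul_vecMulVec' (A : Matrix (Fin n) (Fin n) ℂ) (a b : Fin n → ℂ) :
    A * vecMulVec a b = vecMulVec (A *ᵥ a) b := by
  ext i j
  simp only [Matrix.mul_apply, vecMulVec_apply, mulVec, dotProduct, Finset.sum_mul]
  exact Finset.sum_congr rfl fun k _ => by ring

private lemma vecMulVec_mul' (A : Matrix (Fin n) (Fin n) ℂ) (a b : Fin n → ℂ) :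
    vecMulVec a b * A = vecMulVec a (b ᵥ* A) := by
  ext i j
  simp only [Matrix.mul_apply, vecMulVec_apply, vecMul, dotProduct, Finset.mul_sum]
  exact Finset.sum_congr rfl fun k _ => by ring

private lemma vecMulVec_zero_left (b : Fin n → ℂ) :
    vecMulVec (0 : Fin n → ℂ) b = 0 := by
  ext i j; simp [vecMulVec_apply]

private lemma vecMulVec_zero_right (a : Fin n → ℂ) :
    vecMulVec a (0 : Fin n → ℂ) = 0 := by
  ext i j; simp [vecMulVec_apply]

private lemma dot_self_eq (w : Fin n → ℂ) :
    star w ⬝ᵥ w = ((∑ i, Complex.normSq (w i) : ℝ) : ℂ) := by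
  simp only [dotProduct, Pi.star_apply, Complex.star_def, Complex.ofReal_sum]
  exact Finset.sum_congr rfl fun i _ => (Complex.normSq_eq_conj_mul_self).symm ▸ rfl

private lemma dot_self_eq_zero' (w : Fin n → ℂ) (h : star w ⬝ᵥ w = 0) : w = 0 := by
  have h2 : (∑ i, Complex.normSq (w i)) = 0 := by
    rw [dot_self_eq] at h; exact_mod_cast h
  have hz := (Finset.sum_eq_zero_iff_of_nonneg
    (fun i _ => Complex.normSq_nonneg _)).mp h2
  funext i
  exact Complex.normSq_eq_zero.mp (hz i (Finset.mem_univ i))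

end Helpers

/-- If every jump operator `J_l` is nilpotent (equivalently, has only the eigenvalue 0),
then for a unit vector `ψ`, `L_D[ψψᴴ] = 0` iff `Γ ψ = 0`. -/
theorem stmt4 {M n : ℕ} (J : Fin M → Matrix (Fin n) (Fin n) ℂ) (lam : Fin M → ℝ)
    (hlam : ∀ l, 0 < lam l) (hnil : ∀ l, IsNilpotent (J l))
    (ψ : Fin n → ℂ) (hψ : star ψ ⬝ᵥ ψ = 1) :
    LD J lam (vecMulVec ψ (star ψ)) = 0 ↔ (Gam J lam).mulVec ψ = 0 := by
  set ρ := vecMulVec ψ (star ψ) with hρ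
  have hψ0 : ψ ≠ 0 := by
    intro h; rw [h] at hψ; simp at hψ
  -- abbreviations
  set v : Fin M → (Fin n → ℂ) := fun l => (J l) *ᵥ ψ with hv
  have hvl : ∀ l, (J l) *ᵥ ψ = v l := fun _ => rfl
  -- vanishing of all J_l ψ implies both sides
  have hLD_of : (∀ l, v l = 0) → LD J lam ρ = 0 := by
    intro h
    have h' : ∀ l, (J l) *ᵥ ψ = 0 := h
    unfold LD
    apply Finset.sum_eq_zero
    intro l _
    have h1 : J l * ρ = 0 := by
      rw [hρ, mul_vecMulVec', h' l, vecMulVec_zero_left]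
    have h2 : ρ * ((J l)ᴴ * (J l)) = 0 := by
      rw [hρ, vecMulVec_mul', ← vecMul_vecMul, ← star_mulVec, h' l]
      simp [vecMulVec_zero_right]
    have h3 : (J l)ᴴ * J l * ρ = 0 := by
      rw [mul_assoc, h1, mul_zero]
    rw [h1, h2, h3]
    simp
  have hGam_of : (∀ l, v l = 0) → (Gam J lam) *ᵥ ψ = 0 := by
    intro h
    have h' : ∀ l, (J l) *ᵥ ψ = 0 := h
    unfold Gam
    rw [sum_mulVec']
    apply Finset.sum_eq_zero
    intro l _
    rw [smul_mulVec, ← mulVec_mulVec, h' l, mulVec_zero, smul_zero]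
  -- the quantity aₗ = ‖Jₗψ‖²
  set r : Fin M → ℝ := fun l => ∑ i, Complex.normSq (v l i) with hr
  have ha : ∀ l, star ψ ⬝ᵥ ((J l)ᴴ *ᵥ v l) = ((r l : ℝ) : ℂ) := by
    intro l
    rw [dotProduct_mulVec, ← star_mulVec, hvl l, dot_self_eq]
  constructor
  · -- hard direction
    intro h
    apply hGam_of
    -- scalar c l = ⟨ψ, Jₗψ⟩
    set c : Fin M → ℂ := fun l => star ψ ⬝ᵥ v l with hc
    -- deficit s l = ‖Jₗψ - cₗψ‖² ≥ 0
    set w : Fin M → (Fin n → ℂ) := fun l => v l - c l • ψ with hw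
    set s : Fin M → ℝ := fun l => ∑ i, Complex.normSq (w l i) with hs
    have hs_nonneg : ∀ l, 0 ≤ s l := fun l =>
      Finset.sum_nonneg fun i _ => Complex.normSq_nonneg _
    -- Cauchy–Schwarz identity: a l - c̄ c = s l
    have hcs : ∀ l, ((r l : ℝ) : ℂ) - (starRingEnd ℂ) (c l) * c l = ((s l : ℝ) : ℂ) := by
      intro l
      have hsw : ((s l : ℝ) : ℂ) = star (w l) ⬝ᵥ w l := (dot_self_eq (w l)).symm
      have hvc : star (v l) ⬝ᵥ ψ = (starRingEnd ℂ) (c l) := by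
        rw [star_dotProduct]; rfl
      rw [hsw, hw]
      simp only [star_sub, star_smul, sub_dotProduct, dotProduct_sub, smul_dotProduct,
        dotProduct_smul, dot_self_eq (v l), hψ, smul_eq_mul, mul_one, hvc]
      have hrl : ((∑ i, Complex.normSq (v l i) : ℝ) : ℂ) = ((r l : ℝ) : ℂ) := rfl
      have hcl : star ψ ⬝ᵥ v l = c l := rfl
      simp only [Complex.star_def, hrl, hcl, smul_eq_mul]
      ring
    -- evaluate ψᴴ L_D[ρ] ψ = Σ λₗ (c̄ₗcₗ - aₗ) = -Σ λₗ sₗ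
    have hSψ : star ψ ⬝ᵥ ((LD J lam ρ) *ᵥ ψ) =
        ∑ l, (lam l : ℂ) * ((starRingEnd ℂ) (c l) * c l - ((r l : ℝ) : ℂ)) := by
      unfold LD
      rw [sum_mulVec', dotProduct_sum' Finset.univ]
      apply Finset.sum_congr rfl
      intro l _
      rw [smul_mulVec, dotProduct_smul, smul_eq_mul]
      congr 1
      have hρψ : ρ *ᵥ ψ = ψ := by
        rw [hρ, vecMulVec_mulVec', hψ, one_smul]
      have hρv : ∀ x, ρ *ᵥ x = (star ψ ⬝ᵥ x) • ψ := fun x => by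
        rw [hρ, vecMulVec_mulVec']
      have hd : star ψ ⬝ᵥ ((J l)ᴴ *ᵥ ψ) = (starRingEnd ℂ) (c l) := by
        rw [dotProduct_mulVec, ← star_mulVec, hvl l, star_dotProduct]; rfl
      have hT1 : star ψ ⬝ᵥ ((J l * ρ * (J l)ᴴ) *ᵥ ψ) = (starRingEnd ℂ) (c l) * c l := by
        rw [← mulVec_mulVec, ← mulVec_mulVec, hρv ((J l)ᴴ *ᵥ ψ), hd, mulVec_smul,
          dotProduct_smul, smul_eq_mul, hvl l]
      have hT2 : star ψ ⬝ᵥ (((J l)ᴴ * J l * ρ) *ᵥ ψ) = ((r l : ℝ) : ℂ) := by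
        rw [← mulVec_mulVec, ← mulVec_mulVec, hρψ, hvl l, ha l]
      have hT3 : star ψ ⬝ᵥ ((ρ * ((J l)ᴴ * J l)) *ᵥ ψ) = ((r l : ℝ) : ℂ) := by
        rw [← mulVec_mulVec, hρv, dotProduct_smul, ← mulVec_mulVec, hvl l, ha l,
          smul_eq_mul, hψ, mul_one]
      rw [sub_mulVec, sub_mulVec, dotProduct_sub, dotProduct_sub,
        smul_mulVec, smul_mulVec, dotProduct_smul, dotProduct_smul,
        hT1, hT2, hT3]
      simp only [smul_eq_mul]
      ring
    rw [h] at hSψ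
    simp only [zero_mulVec, dotProduct_zero] at hSψ
    -- so Σ λₗ sₗ = 0
    have hsum0 : (∑ l, (lam l * s l : ℝ)) = 0 := by
      have hC : (∑ l, ((lam l * s l : ℝ) : ℂ)) = 0 := by
        calc ∑ l, ((lam l * s l : ℝ) : ℂ)
            = ∑ l, (lam l : ℂ) * ((s l : ℝ) : ℂ) := by push_cast; rfl
          _ = -∑ l, (lam l : ℂ) * ((starRingEnd ℂ) (c l) * c l - ((r l : ℝ) : ℂ)) := by
              rw [← Finset.sum_neg_distrib]
              refine Finset.sum_congr rfl fun l _ => ?_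
              rw [← hcs l]; ring
          _ = 0 := by rw [← hSψ, neg_zero]
      exact_mod_cast hC
    have hszero : ∀ l, s l = 0 := by
      intro l
      have h1 := (Finset.sum_eq_zero_iff_of_nonneg
        (fun l _ => mul_nonneg (hlam l).le (hs_nonneg l))).mp hsum0 l (Finset.mem_univ l)
      rcases mul_eq_zero.mp h1 with h' | h'
      · exact absurd h' (hlam l).ne'
      · exact h'
    -- hence w l = 0, so J l ψ = c l • ψ
    have heig : ∀ l, v l = c l • ψ := by
      intro l
      have h0 : star (w l) ⬝ᵥ w l = 0 := by
        rw [dot_self_eq]; exact_mod_cast hszero l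
      have hw0 : w l = 0 := dot_self_eq_zero' _ h0
      have h1 : v l - c l • ψ = 0 := hw0
      exact sub_eq_zero.mp h1
    -- nilpotency forces c l = 0
    intro l
    obtain ⟨k, hk⟩ := hnil l
    have hpow : ∀ m : ℕ, (J l) ^ m *ᵥ ψ = (c l) ^ m • ψ := by
      intro m
      induction m with
      | zero => simp
      | succ m ih =>
        rw [pow_succ', ← mulVec_mulVec, ih, mulVec_smul, hvl l, heig l,
          smul_smul, ← pow_succ]
    have h0 : (c l) ^ k • ψ = 0 := by
      rw [← hpow k, hk, zero_mulVec]
    have hck : (c l) ^ k = 0 := by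
      by_contra hne
      exact hψ0 (by simpa [hne] using (smul_eq_zero.mp h0))
    have hc0 : c l = 0 := pow_eq_zero_iff' |>.mp hck |>.1
    rw [heig l, hc0, zero_smul]
  · -- easy direction
    intro h
    apply hLD_of
    have hdot : star ψ ⬝ᵥ ((Gam J lam) *ᵥ ψ) = ∑ l, (lam l : ℂ) * ((r l : ℝ) : ℂ) := by
      unfold Gam
      rw [sum_mulVec', dotProduct_sum' Finset.univ]
      apply Finset.sum_congr rfl
      intro l _
      rw [smul_mulVec, dotProduct_smul, smul_eq_mul, ← mulVec_mulVec, hvl l, ha l]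
    rw [h] at hdot
    simp only [dotProduct_zero] at hdot
    have hsum0 : (∑ l, (lam l * r l : ℝ)) = 0 := by
      have : ((∑ l, (lam l * r l : ℝ) : ℝ) : ℂ) = 0 := by
        push_cast
        exact hdot.symm
      exact_mod_cast this
    have hr_nonneg : ∀ l, 0 ≤ r l := fun l =>
      Finset.sum_nonneg fun i _ => Complex.normSq_nonneg _
    intro l
    have h1 := (Finset.sum_eq_zero_iff_of_nonneg
      (fun l _ => mul_nonneg (hlam l).le (hr_nonneg l))).mp hsum0 l (Finset.mem_univ l)
    have hrl : r l = 0 := by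
      rcases mul_eq_zero.mp h1 with h' | h'
      · exact absurd h' (hlam l).ne'
      · exact h'
    have h2 : star (v l) ⬝ᵥ v l = 0 := by
      rw [dot_self_eq]; exact_mod_cast hrl
    exact dot_self_eq_zero' _ h2
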